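/- arXiv:2501.16851 — 5 statements merged into one kernel-verified Lean document; each statement's English description precedes it below -/
import Mathlib

section
/- Let (X,d) be a complete metric space and T a self-mapping of X. Define the non-increasing function θ : [0,1) → (1/2,1] by θ(r) = 1 if 0 ≤ r ≤ (√5−1)/2, θ(r) = (1−r)/r² if (√5−1)/2 ≤ r ≤ 1/√2, and θ(r) = 1/(1+r) if 1/√2 ≤ r < 1. If there exists r ∈ [0,1) such that for all y,z ∈ X, θ(r)·d(y,Ty) ≤ d(y,z) implies d(Ty,Tz) ≤ r·d(y,z), then T has a unique fixed point y′, and moreover limₙ Tⁿy = y′ for all y ∈ X. -/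
open Filter

/-- The non-increasing function `θ : [0,1) → (1/2,1]` of Suzuki's theorem. -/
noncomputable def suzukiTheta (r : ℝ) : ℝ :=
  if r ≤ (Real.sqrt 5 - 1) / 2 then 1
  else if r ≤ 1 / Real.sqrt 2 then (1 - r) / r ^ 2
  else 1 / (1 + r)

set_option maxHeartbeats 1000000 in
/-- **Suzuki's generalized Banach contraction principle** (Theorem 2.2 of the paper).
If `(X,d)` is a complete metric space, `T : X → X`, and there is `r ∈ [0,1)` such that
`θ(r)·d(y,Ty) ≤ d(y,z)` implies `d(Ty,Tz) ≤ r·d(y,z)` for all `y z`, then `T` has a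
unique fixed point `y'`, and moreover `Tⁿ y → y'` for every `y ∈ X`. -/
theorem suzuki_fixed_point {X : Type*} [MetricSpace X] [CompleteSpace X] [Nonempty X]
    (T : X → X) (r : ℝ) (hr0 : 0 ≤ r) (hr1 : r < 1)
    (h : ∀ y z : X, suzukiTheta r * dist y (T y) ≤ dist y z →
      dist (T y) (T z) ≤ r * dist y z) :
    ∃ y' : X, T y' = y' ∧ (∀ x : X, T x = x → x = y') ∧
      ∀ y : X, Tendsto (fun n => T^[n] y) atTop (nhds y') := by
  have s5nn : (0:ℝ) ≤ Real.sqrt 5 := Real.sqrt_nonneg 5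
  have s2nn : (0:ℝ) ≤ Real.sqrt 2 := Real.sqrt_nonneg 2
  have s5sq : Real.sqrt 5 ^ 2 = 5 := Real.sq_sqrt (by norm_num)
  have s2sq : Real.sqrt 2 ^ 2 = 2 := Real.sq_sqrt (by norm_num)
  have s2pos : (0:ℝ) < Real.sqrt 2 := by nlinarith
  have s5pos : (1:ℝ) < Real.sqrt 5 := by nlinarith
  set c := suzukiTheta r with hcdef
  have hc1 : c ≤ 1 := by
    rw [hcdef, suzukiTheta]
    split_ifs with h1 h2
    · exact le_rfl
    · push_neg at h1
      have hrpos : 0 < r := by nlinarith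
      rw [div_le_one (by positivity)]
      nlinarith
    · rw [div_le_one (by linarith)]
      linarith
  have hc0 : 0 ≤ c := by
    rw [hcdef, suzukiTheta]
    split_ifs with h1 h2
    · norm_num
    · push_neg at h1
      have hrpos : 0 < r := by nlinarith
      exact div_nonneg (by linarith) (by positivity)
    · positivity
  have hmain : (2 * (r * r) < 1 ∧ c * (r * r) ≤ 1 - r) ∨ c * (1 + r) ≤ 1 := by
    rw [hcdef, suzukiTheta]
    split_ifs with h1 h2
    · left
      constructor
      · nlinarith [sq_nonneg (Real.sqrt 5 - 2), sq_nonneg (2 * r + 1 - Real.sqrt 5)]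
      · nlinarith [sq_nonneg (2 * r + 1 - Real.sqrt 5)]
    · push_neg at h1
      have hrpos : 0 < r := by nlinarith
      rcases lt_or_eq_of_le h2 with hlt | heq
      · left
        constructor
        · have hrs : r * Real.sqrt 2 < 1 := by
            rw [lt_div_iff₀ s2pos] at hlt
            exact hlt
          nlinarith
        · have : (1 - r) / r ^ 2 * (r * r) = 1 - r := by
            rw [pow_two]
            rw [div_mul_cancel₀ _ (by positivity : r * r ≠ 0)]
          linarith [this.le]
      · right
        have hrr : r * r = 1 / 2 := by
          have h2' : Real.sqrt 2 * Real.sqrt 2 = 2 := Real.mul_self_sqrt (by norm_num)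
          rw [heq, div_mul_div_comm, h2']
          norm_num
        have e : (1 - r) * (1 + r) = 1 / 2 := by nlinarith
        have h12 : r ^ 2 = 1 / 2 := by rw [pow_two, hrr]
        have : (1 - r) / r ^ 2 * (1 + r) = 1 := by
          rw [h12]
          linear_combination 2 * e
        linarith
    · right
      have hpos : (0:ℝ) < 1 + r := by linarith
      rw [div_mul_cancel₀]
      exact hpos.ne'
  -- basic contraction along the orbit
  have hA : ∀ x : X, dist (T x) (T (T x)) ≤ r * dist x (T x) := fun x =>
    h x (T x) (mul_le_of_le_one_left dist_nonneg hc1)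
  -- every orbit converges to a fixed point
  have key : ∀ u : X, ∃ z : X, T z = z ∧ Tendsto (fun n => T^[n] u) atTop (nhds z) := by
    intro u
    set f : ℕ → X := fun n => T^[n] u with hf
    have hstep : ∀ n, f (n + 1) = T (f n) := by
      intro n
      simp [hf, Function.iterate_succ_apply']
    have hgeo : ∀ n, dist (f n) (f (n + 1)) ≤ dist u (T u) * r ^ n := by
      intro n
      induction n with
      | zero => simp [hf]
      | succ n ih =>
        have h1 : dist (f (n + 1)) (f (n + 2)) ≤ r * dist (f n) (f (n + 1)) := by
          have h1' := hA (f n)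
          rw [← hstep n] at h1'
          rw [← hstep (n + 1)] at h1'
          simpa using h1'
        calc dist (f (n + 1)) (f (n + 2)) ≤ r * dist (f n) (f (n + 1)) := h1
          _ ≤ r * (dist u (T u) * r ^ n) := by
              exact mul_le_mul_of_nonneg_left ih hr0
          _ = dist u (T u) * r ^ (n + 1) := by ring
    have hcauchy : CauchySeq f :=
      cauchySeq_of_le_geometric r (dist u (T u)) hr1 hgeo
    obtain ⟨z, hz⟩ := cauchySeq_tendsto_of_complete hcauchy
    refine ⟨z, ?_, hz⟩
    -- the star lemma : dist (T x) z ≤ r * dist x z for x ≠ z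
    have hstar : ∀ x : X, x ≠ z → dist (T x) z ≤ r * dist x z := by
      intro x hx
      have hd : 0 < dist x z := dist_pos.2 hx
      obtain ⟨N, hN⟩ := (Metric.tendsto_atTop.mp hz) (dist x z / 3) (by positivity)
      have hev : ∀ n, N ≤ n → dist (f (n + 1)) (T x) ≤ r * dist (f n) x := by
        intro n hn
        have b1 : dist (f n) z < dist x z / 3 := hN n hn
        have b2 : dist (f (n + 1)) z < dist x z / 3 := hN (n + 1) (by omega)
        have hfT : T (f n) = f (n + 1) := (hstep n).symm
        have hprem : c * dist (f n) (T (f n)) ≤ dist (f n) x := by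
          have e1 : dist (f n) (T (f n)) ≤ dist (f n) z + dist (f (n + 1)) z := by
            rw [hfT]
            calc dist (f n) (f (n + 1)) ≤ dist (f n) z + dist z (f (n + 1)) :=
                  dist_triangle _ _ _
              _ = dist (f n) z + dist (f (n + 1)) z := by rw [dist_comm z]
          have e2 : dist x z ≤ dist x (f n) + dist (f n) z := dist_triangle _ _ _
          have e3 : c * dist (f n) (T (f n)) ≤ dist (f n) (T (f n)) :=
            mul_le_of_le_one_left dist_nonneg hc1
          have e4 : dist x (f n) = dist (f n) x := dist_comm _ _
          linarith
        have := h (f n) x hprem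
        rwa [hfT] at this
      have t1 : Tendsto (fun n => dist (f (n + 1)) (T x)) atTop (nhds (dist z (T x))) :=
        Tendsto.dist (hz.comp (tendsto_add_atTop_nat 1)) tendsto_const_nhds
      have t2 : Tendsto (fun n => r * dist (f n) x) atTop (nhds (r * dist z x)) :=
        Tendsto.const_mul r (Tendsto.dist hz tendsto_const_nhds)
      have := le_of_tendsto_of_tendsto t1 t2 (eventually_atTop.2 ⟨N, hev⟩)
      rwa [dist_comm z (T x), dist_comm z x] at this
    -- now show z is fixed
    by_contra hne
    have ha : 0 < dist z (T z) := by
      rw [dist_pos]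
      exact fun e => hne e.symm
    have h1 : dist (T z) (T (T z)) ≤ r * dist z (T z) := hA z
    have hTzne : T z ≠ z := hne
    have h2 : dist (T (T z)) z ≤ r * dist z (T z) := by
      have := hstar (T z) hTzne
      rwa [dist_comm (T z) z] at this
    have hT2ne : T (T z) ≠ z := by
      intro e
      rw [e, dist_comm (T z) z] at h1
      nlinarith
    have h3 : dist (T (T (T z))) z ≤ r * dist (T (T z)) z := hstar _ hT2ne
    have h23 : dist (T (T z)) (T (T (T z))) ≤ r * (r * dist z (T z)) := by
      have := hA (T z)
      nlinarith
    have hlow : (1 - r) * dist z (T z) ≤ dist (T (T z)) z := by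
      have tri : dist z (T z) ≤ dist z (T (T z)) + dist (T (T z)) (T z) :=
        dist_triangle _ _ _
      have c1 : dist (T (T z)) (T z) = dist (T z) (T (T z)) := dist_comm _ _
      have c2 : dist z (T (T z)) = dist (T (T z)) z := dist_comm _ _
      linarith
    rcases hmain with ⟨hhalf, hcr⟩ | hcb
    · -- case r² < 1/2
      have hprem : c * dist (T (T z)) (T (T (T z))) ≤ dist (T (T z)) z := by
        have e1 : c * dist (T (T z)) (T (T (T z))) ≤ c * (r * (r * dist z (T z))) :=
          mul_le_mul_of_nonneg_left h23 hc0
        nlinarith [dist_nonneg (x := z) (y := T z)]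
      have hk := h (T (T z)) z hprem
      have hk2 : dist (T (T (T z))) (T z) ≤ r * (r * dist z (T z)) := by nlinarith
      have h3' : dist (T (T (T z))) z ≤ r * (r * dist z (T z)) := by nlinarith
      have tri : dist z (T z) ≤ dist z (T (T (T z))) + dist (T (T (T z))) (T z) :=
        dist_triangle _ _ _
      rw [dist_comm z (T (T (T z)))] at tri
      nlinarith
    · -- case θ(1+r) ≤ 1 : dichotomy argument
      have hpos : (0:ℝ) < 1 + r := by linarith
      obtain ⟨N, hN⟩ := (Metric.tendsto_atTop.mp hz)
        (dist z (T z) / (2 * (1 + r))) (by positivity)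
      have hdich : ∃ m, N ≤ m ∧ dist (f (m + 1)) (T z) ≤ r * dist (f m) z := by
        by_cases hd1 : c * dist (f N) (T (f N)) ≤ dist (f N) z
        · refine ⟨N, le_refl N, ?_⟩
          have := h (f N) z hd1
          rwa [← hstep N] at this
        · refine ⟨N + 1, by omega, ?_⟩
          have hd2 : c * dist (f (N + 1)) (T (f (N + 1))) ≤ dist (f (N + 1)) z := by
            by_contra hd2
            push_neg at hd1 hd2
            rw [← hstep N] at hd1
            rw [← hstep (N + 1)] at hd2
            have eA : dist (f (N + 1)) (f (N + 2)) ≤ r * dist (f N) (f (N + 1)) := by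
              have eA' := hA (f N)
              rw [← hstep N] at eA'
              rw [← hstep (N + 1)] at eA'
              simpa using eA'
            have eB : c * dist (f (N + 1)) (f (N + 2)) ≤ c * (r * dist (f N) (f (N + 1))) :=
              mul_le_mul_of_nonneg_left eA hc0
            have tri : dist (f N) (f (N + 1)) ≤ dist (f N) z + dist z (f (N + 1)) :=
              dist_triangle _ _ _
            rw [dist_comm z (f (N + 1))] at tri
            nlinarith [dist_nonneg (x := f N) (y := f (N + 1))]
          have := h (f (N + 1)) z hd2
          rwa [← hstep (N + 1)] at this
      obtain ⟨m, hm, hmle⟩ := hdich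
      have b1 : dist (f m) z < dist z (T z) / (2 * (1 + r)) := hN m hm
      have b2 : dist (f (m + 1)) z < dist z (T z) / (2 * (1 + r)) := hN (m + 1) (by omega)
      have tri : dist z (T z) ≤ dist z (f (m + 1)) + dist (f (m + 1)) (T z) :=
        dist_triangle _ _ _
      rw [dist_comm z (f (m + 1))] at tri
      have eps : (1 + r) * (dist z (T z) / (2 * (1 + r))) = dist z (T z) / 2 := by
        field_simp
      nlinarith [mul_le_mul_of_nonneg_left b1.le hr0]
  -- assemble
  obtain ⟨z, hzfix, hzconv⟩ := key (Classical.arbitrary X)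
  have huniq : ∀ x : X, T x = x → x = z := by
    intro x hx
    have hprem : suzukiTheta r * dist x (T x) ≤ dist x z := by
      rw [hx, dist_self, mul_zero]
      exact dist_nonneg
    have hle := h x z hprem
    rw [hx, hzfix] at hle
    have h0 : dist x z = 0 := by nlinarith [dist_nonneg (x := x) (y := z)]
    exact eq_of_dist_eq_zero h0
  refine ⟨z, hzfix, huniq, fun y => ?_⟩
  obtain ⟨w, hwfix, hwconv⟩ := key y
  rwa [huniq w hwfix] at hwconv
end

section
/- Let (X,d) be a complete metric space. If T : X → X is a Suzuki-type generalized φ-contraction mapping, then T possesses a unique fixed point in X. -/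
open Filter

/-- **Pant's fixed point theorem for Suzuki-type generalized φ-contractions**
(Theorem 3.5 of the paper). Let `(X,d)` be a complete metric space and `T : X → X`.
Suppose `φ : [0,∞) → [0,∞)` satisfies `φ t < t` for all `t > 0` and
`limsup_{s→t⁺} φ s < t` for all `t > 0`, and for all `y z ∈ X`,
`(1/2)·d(y,Ty) ≤ d(y,z)` implies `d(Ty,Tz) ≤ φ(max{d(y,z), d(y,Ty), d(z,Tz)})`.
Then `T` has a unique fixed point in `X`. -/
theorem stgpc_fixed_point {X : Type*} [MetricSpace X] [CompleteSpace X] [Nonempty X]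
    (T : X → X) (φ : ℝ → ℝ)
    (hφ_nonneg : ∀ t ≥ 0, 0 ≤ φ t)
    (hφ_lt : ∀ t > 0, φ t < t)
    (hφ_limsup : ∀ t > 0, Filter.limsup φ (nhdsWithin t (Set.Ioi t)) < t)
    (hT : ∀ y z : X, (1 / 2) * dist y (T y) ≤ dist y z →
      dist (T y) (T z) ≤ φ (max (dist y z) (max (dist y (T y)) (dist z (T z))))) :
    ∃! x : X, T x = x := by
  classical
  -- packaged consequence of the limsup hypothesis
  have key : ∀ ε : ℝ, 0 < ε → ∃ c, c < ε ∧ ∃ δ, 0 < δ ∧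
      ∀ s, ε ≤ s → s < ε + δ → φ s ≤ c := by
    intro ε hε
    have hL := hφ_limsup ε hε
    set L := Filter.limsup φ (nhdsWithin ε (Set.Ioi ε)) with hLdef
    set b := (L + ε) / 2 with hb
    have hLb : L < b := by rw [hb]; linarith
    have hbε : b < ε := by rw [hb]; linarith
    have hbd : Filter.IsBoundedUnder (· ≤ ·) (nhdsWithin ε (Set.Ioi ε)) φ := by
      apply Filter.isBoundedUnder_of_eventually_le (a := ε + 1)
      filter_upwards [Ioo_mem_nhdsGT_of_mem (show ε ∈ Set.Ico ε (ε+1) from ⟨le_rfl, by linarith⟩)]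
        with s hs
      exact le_of_lt (lt_trans (hφ_lt s (lt_trans hε hs.1)) hs.2)
    have hev : ∀ᶠ s in nhdsWithin ε (Set.Ioi ε), φ s < b :=
      Filter.eventually_lt_of_limsup_lt hLb hbd
    obtain ⟨u', hu', hsub⟩ := mem_nhdsGT_iff_exists_Ioo_subset.mp hev
    refine ⟨max b (φ ε), max_lt hbε (hφ_lt ε hε), u' - ε, by simpa using hu', ?_⟩
    intro s hs1 hs2
    rcases eq_or_lt_of_le hs1 with h | h
    · exact le_trans (le_of_eq (by rw [← h])) (le_max_right _ _)
    · have : φ s < b := hsub ⟨h, by linarith⟩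
      exact le_trans this.le (le_max_left _ _)
  obtain ⟨x0⟩ := ‹Nonempty X›
  set x : ℕ → X := fun n => T^[n] x0 with hx
  have hx_succ : ∀ n, x (n + 1) = T (x n) := fun n =>
    Function.iterate_succ_apply' T n x0
  set d : ℕ → ℝ := fun n => dist (x n) (x (n + 1)) with hds
  have hd_nonneg : ∀ n, 0 ≤ d n := fun n => dist_nonneg
  -- contraction along the orbit
  have horb : ∀ n, d (n + 1) ≤ φ (max (d n) (d (n + 1))) := by
    intro n
    have h := hT (x n) (x (n + 1)) (by
      rw [← hx_succ n]
      nlinarith [dist_nonneg (x := x n) (y := x (n+1))])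
    rw [← hx_succ n, ← hx_succ (n + 1)] at h
    simpa [hds, max_comm, max_assoc, max_left_comm] using h
  -- successive distances are nonincreasing, in fact shrink via φ
  have hmono : ∀ n, d (n + 1) ≤ d n := by
    intro n
    by_contra hcon
    push_neg at hcon
    have h1 : 0 < d (n + 1) := lt_of_le_of_lt (hd_nonneg n) hcon
    have h2 := horb n
    rw [max_eq_right hcon.le] at h2
    exact absurd (lt_of_le_of_lt h2 (hφ_lt _ h1)) (lt_irrefl _)
  have hshrink : ∀ n, 0 < d n → d (n + 1) ≤ φ (d n) := by
    intro n hn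
    have h2 := horb n
    rwa [max_eq_left (hmono n)] at h2
  -- d tends to 0
  have hd0 : Tendsto d atTop (nhds 0) := by
    have hanti : Antitone d := antitone_nat_of_succ_le hmono
    have hbdd : BddBelow (Set.range d) := ⟨0, by rintro _ ⟨n, rfl⟩; exact hd_nonneg n⟩
    have htend : Tendsto d atTop (nhds (⨅ n, d n)) := tendsto_atTop_ciInf hanti hbdd
    have hrle : ∀ n, (⨅ n, d n) ≤ d n := fun n => ciInf_le hbdd n
    have hr0 : (⨅ n, d n) ≤ 0 := by
      by_contra hcon
      push_neg at hcon
      set r := ⨅ n, d n with hrdef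
      obtain ⟨c, hc, δ, hδ, hbound⟩ := key r hcon
      have hev : ∀ᶠ n in atTop, d n < r + δ :=
        htend.eventually_lt_const (by linarith)
      obtain ⟨n, hn⟩ := hev.exists
      have hdn : 0 < d n := lt_of_lt_of_le hcon (hrle n)
      have := hshrink n hdn
      have hb2 := hbound (d n) (hrle n) hn
      have : d (n + 1) ≤ c := le_trans this hb2
      linarith [hrle (n + 1)]
    have hr0' : (⨅ n, d n) = 0 :=
      le_antisymm hr0 (le_ciInf fun n => hd_nonneg n)
    rwa [hr0'] at htend
  -- Cauchy
  have hcauchy : CauchySeq x := by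
    rw [Metric.cauchySeq_iff']
    intro ε0 hε0
    obtain ⟨c, hc, δ0, hδ0, hbound⟩ := key (ε0 / 2) (by linarith)
    set ε := ε0 / 2 with hεdef
    set δ := min δ0 ε with hδdef
    have hδpos : 0 < δ := lt_min hδ0 (by positivity)
    have hδε : δ ≤ ε := min_le_right _ _
    have hεd : ε + δ ≤ ε0 := by
      have := min_le_right δ0 ε
      simp only [hδdef, hεdef] at *
      linarith
    obtain ⟨N, hN⟩ := (Metric.tendsto_atTop.mp hd0 (δ / 2) (by positivity))
    refine ⟨N, fun m hm => ?_⟩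
    have hdk : ∀ k, N ≤ k → d k < δ / 2 := by
      intro k hk
      have := hN k hk
      rwa [Real.dist_eq, sub_zero, abs_of_nonneg (hd_nonneg k)] at this
    -- show by induction: dist (x N) (x m) < ε + δ
    have main : ∀ m, N ≤ m → dist (x N) (x m) < ε + δ := by
      intro m hm
      induction m with
      | zero =>
          have : N = 0 := Nat.le_zero.mp hm
          subst this
          simpa using (by positivity : (0:ℝ) < ε + δ)
      | succ m ih =>
          rcases Nat.lt_or_ge N (m + 1) with hlt | hge
          · have hm' : N ≤ m := Nat.lt_succ_iff.mp hlt
            have ihm := ih hm'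
            rcases lt_or_ge (dist (x N) (x m)) ε with hcase | hcase
            · -- triangle suffices
              calc dist (x N) (x (m + 1)) ≤ dist (x N) (x m) + d m :=
                    dist_triangle _ _ _
                _ < ε + δ := by
                    have := hdk m hm'
                    linarith
            · -- apply the contraction
              have hcond : (1 / 2) * dist (x N) (T (x N)) ≤ dist (x N) (x m) := by
                rw [← hx_succ N]
                have h1 : d N < δ / 2 := hdk N le_rfl
                have : (1/2 : ℝ) * d N < ε := by linarith
                exact le_of_lt (lt_of_lt_of_le this hcase)
              have hTT := hT (x N) (x m) hcond
              rw [← hx_succ N, ← hx_succ m] at hTT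
              have hdN : d N ≤ dist (x N) (x m) := by
                have : d N < δ / 2 := hdk N le_rfl
                linarith
              have hdm : d m ≤ dist (x N) (x m) := by
                have : d m < δ / 2 := hdk m hm'
                linarith
              have hmax : max (dist (x N) (x m))
                  (max (dist (x N) (x (N+1))) (dist (x m) (x (m+1))))
                  = dist (x N) (x m) := by
                rw [max_eq_left]
                exact max_le hdN hdm
              rw [hmax] at hTT
              have hφb : φ (dist (x N) (x m)) ≤ c := by
                apply hbound _ hcase
                calc dist (x N) (x m) < ε + δ := ihm
                  _ ≤ ε + δ0 := by have := min_le_left δ0 ε; linarith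
              calc dist (x N) (x (m + 1))
                  ≤ d N + dist (x (N + 1)) (x (m + 1)) := dist_triangle _ _ _
                _ ≤ d N + c := by linarith
                _ < δ / 2 + c := by have := hdk N le_rfl; linarith
                _ < ε + δ := by linarith
          · have : N = m + 1 := le_antisymm hm hge
            subst this
            simpa using (by positivity : (0:ℝ) < ε + δ)
    have := main m hm
    rw [dist_comm]
    exact lt_of_lt_of_le this hεd
  obtain ⟨u, hu⟩ := cauchySeq_tendsto_of_complete hcauchy
  -- u is a fixed point
  have hfix : T u = u := by
    by_contra hne
    have hr : 0 < dist u (T u) := dist_pos.mpr (fun h => hne h.symm)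
    set r := dist u (T u) with hrdef
    set c := φ r with hcdef
    have hc : c < r := hφ_lt r hr
    have hcnn : 0 ≤ c := hφ_nonneg r hr.le
    set s := (r - c) / 2 with hsd
    have hspos : 0 < s := by rw [hsd]; linarith
    obtain ⟨N, hN⟩ := Metric.tendsto_atTop.mp hu s hspos
    -- dichotomy
    have hdich : (1 / 2) * d N ≤ dist (x N) u ∨ (1 / 2) * d (N + 1) ≤ dist (x (N + 1)) u := by
      by_contra hcon
      push_neg at hcon
      obtain ⟨h1, h2⟩ := hcon
      have ht : d N ≤ dist (x N) u + dist u (x (N + 1)) := dist_triangle _ _ _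
      rw [dist_comm u (x (N+1))] at ht
      have hmono' := hmono N
      linarith
    obtain ⟨k, hkN, hk⟩ : ∃ k, N ≤ k ∧ (1 / 2) * d k ≤ dist (x k) u := by
      rcases hdich with h | h
      · exact ⟨N, le_rfl, h⟩
      · exact ⟨N + 1, Nat.le_succ N, h⟩
    have hxku : dist (x k) u < s := hN k hkN
    have hxk1u : dist (x (k + 1)) u < s := hN (k + 1) (Nat.le_succ_of_le hkN)
    have hdks : d k < 2 * s := by
      have := dist_triangle (x k) u (x (k + 1))
      rw [dist_comm u (x (k+1))] at this
      simp only [hds] at *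
      linarith
    have hcond : (1 / 2) * dist (x k) (T (x k)) ≤ dist (x k) u := by
      rw [← hx_succ k]; exact hk
    have hTT := hT (x k) u hcond
    rw [← hx_succ k] at hTT
    have hmax : max (dist (x k) u) (max (dist (x k) (x (k+1))) (dist u (T u))) = r := by
      rw [← hrdef]
      rw [max_eq_right, max_eq_right]
      · have : d k < 2 * s := hdks
        have h2s : 2 * s ≤ r := by rw [hsd]; linarith
        simp only [hds] at this ⊢
        linarith
      · apply le_max_of_le_right
        have : 2 * s ≤ r := by rw [hsd]; linarith
        linarith
    rw [hmax] at hTT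
    -- but dist (x (k+1)) (T u) must be close to r
    have hlow : r - s ≤ dist (x (k + 1)) (T u) := by
      have := dist_triangle u (x (k + 1)) (T u)
      rw [dist_comm u (x (k+1))] at this
      linarith
    rw [hsd] at hlow
    rw [← hcdef] at hTT
    linarith
  refine ⟨u, hfix, ?_⟩
  intro v hv
  by_contra hne
  have hpos : 0 < dist u v := dist_pos.mpr (fun h => hne h.symm)
  have hcond : (1 / 2) * dist u (T u) ≤ dist u v := by
    rw [hfix]; simp [dist_nonneg]
  have := hT u v hcond
  rw [hfix, hv] at this
  have hmax' : max (dist u v) (max (dist u u) (dist v v)) = dist u v := by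
    simp [le_of_lt hpos]
  rw [hmax'] at this
  exact absurd (lt_of_le_of_lt this (hφ_lt _ hpos)) (lt_irrefl _)
end

section
/- Let y_0 < y_1 < ⋯ < y_P be real numbers, A = [y_0,y_P], A_p = [y_{p−1},y_p], and let z_0, …, z_P be real numbers. For p = 1,…,P let L_p : A → A_p be a homeomorphism with L_p(y_0) = y_{p−1} and L_p(y_P) = y_p, and let F_p : A × ℝ → ℝ have the form F_p(y,z) = α_p·z + q_p(y) with q_p : A → ℝ continuous and F_p(y_0,z_0) = z_{p−1}, F_p(y_P,z_P) = z_p. Let φ : [0,∞) → [0,∞) be nondecreasing with φ(t) < t and limsup_{s→t⁺} φ(s) < t for all t > 0, and suppose each F_p is a Suzuki-type generalized φ-contraction in the second variable: for all y ∈ A and z,t ∈ ℝ, (1/2)·|z − F_p(y,z)| ≤ |z − t| implies |F_p(y,z) − F_p(y,t)| ≤ φ(max{|z−t|, |z − F_p(y,z)|, |t − F_p(y,t)|}). Let 𝒞₀(A) be the set of continuous h : A → ℝ with h(y_0) = z_0 and h(y_P) = z_P, equipped with the sup metric, and define the operator 𝕋 on 𝒞₀(A) by (𝕋h)(y) = F_p(L_p^{−1}(y),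 h(L_p^{−1}(y))) for y ∈ A_p. Then for all g,h ∈ 𝒞₀(A), (1/2)·‖g − 𝕋g‖_∞ ≤ ‖g − h‖_∞ implies ‖𝕋g − 𝕋h‖_∞ ≤ φ(max{‖g − h‖_∞, ‖g − 𝕋g‖_∞, ‖h − 𝕋h‖_∞}), i.e. 𝕋 is a Suzuki-type generalized φ-contraction on (𝒞₀(A), ‖·‖_∞). -/
/-
For an affine map `s ↦ α s + Q` the Suzuki condition pins down the slope: the map cannot be a
translation (`α = 1` contradicts `φ t < t`), so it has a fixed point, and after conjugating by the
translation to that fixed point the condition tested at well-chosen pairs forces first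
`|1 - α| ≤ 2` and then `|α| d ≤ φ d` for every `d ≥ 0`. On the piece `A_p = L_p(A)` the two images
`𝕋g, 𝕋h` differ by `α_p (g - h) ∘ L_p⁻¹`, whence `|𝕋g - 𝕋h| ≤ φ ‖g - h‖_∞` by monotonicity of `φ`.
-/

open Filter

/-- The sup distance `‖g − h‖_∞ = sup_{x ∈ A} |g(x) − h(x)|` on a set `A ⊆ ℝ`. -/
noncomputable def supDistOn (A : Set ℝ) (g h : ℝ → ℝ) : ℝ :=
  ⨆ x : A, |g x - h x|

def IsSuzukiContraction (φ : ℝ → ℝ) (f : ℝ → ℝ) : Prop :=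
  ∀ s t : ℝ, (1 / 2) * |s - f s| ≤ |s - t| →
    |f s - f t| ≤ φ (max |s - t| (max |s - f s| |t - f t|))

namespace IsSuzukiContraction

variable {φ f : ℝ → ℝ}

theorem conj_add (hf : IsSuzukiContraction φ f) (c : ℝ) :
    IsSuzukiContraction φ (fun a => f (a + c) - c) := by
  intro s t hst
  have key := hf (s + c) (t + c)
  simp only [add_sub_add_right_eq_sub, show ∀ a, a + c - f (a + c) = a - (f (a + c) - c) by
    intro a; ring] at key
  simpa only [sub_sub_sub_cancel_right] using key hst

theorem linear_apply {α : ℝ} (hf : IsSuzukiContraction φ (fun a => α * a)) {a b : ℝ}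
    (hab : (1 / 2) * (|1 - α| * |a|) ≤ |a - b|) :
    |α| * |a - b| ≤ φ (max |a - b| (max (|1 - α| * |a|) (|1 - α| * |b|))) := by
  have hsub : ∀ x, x - α * x = (1 - α) * x := fun x => by ring
  have key := hf a b
  simp only [hsub, ← mul_sub, abs_mul] at key
  exact key hab

variable (hφ : ∀ t > 0, φ t < t)
include hφ

theorem slope_ne_one {α Q : ℝ} (hf : IsSuzukiContraction φ (fun s => α * s + Q)) : α ≠ 1 := by
  rintro rfl
  set d := |Q| + 1
  have hd : 0 < d := by positivity
  have key := hf 0 d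
  simp only [one_mul, zero_add, zero_sub, sub_add_cancel_left, abs_neg,
    show Q - (d + Q) = -d by ring, abs_of_pos hd] at key
  have := key (by linarith [abs_nonneg Q])
  rw [max_self, max_eq_left (by linarith)] at this
  linarith [hφ d hd]

theorem abs_one_sub_slope_le_two {α : ℝ} (hf : IsSuzukiContraction φ (fun a => α * a)) :
    |1 - α| ≤ 2 := by
  by_contra! hc
  have hα : |1 - α| - 1 ≤ |α| := by linarith [abs_sub (1 : ℝ) α, abs_one (α := ℝ)]
  -- test the condition at `a = 1`, `b = 1 - |1 - α|`, where the displacement at `b` dominates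
  have key := hf.linear_apply (a := 1) (b := 1 - |1 - α|)
  generalize |1 - α| = c at hc hα key
  have hb : |1 - (1 - c)| = c := by rw [sub_sub_cancel, abs_of_pos (by linarith)]
  have hbc : |1 - c| = c - 1 := by rw [abs_sub_comm, abs_of_pos (by linarith)]
  have hle : c ≤ c * (c - 1) := by nlinarith
  have hmax : max c (max c (c * (c - 1))) = c * (c - 1) := by
    rw [max_eq_right hle, max_eq_right hle]
  rw [hb, abs_one, mul_one, hbc, hmax] at key
  nlinarith [key (by linarith), hφ (c * (c - 1)) (by linarith)]

theorem abs_slope_mul_le {α : ℝ} (hf : IsSuzukiContraction φ (fun a => α * a)) {d : ℝ}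
    (hd : 0 ≤ d) : |α| * d ≤ φ d := by
  have hc := hf.abs_one_sub_slope_le_two hφ
  have hhalf : |d / 2| = d / 2 := abs_of_nonneg (by linarith)
  have hneg : |-(d / 2)| = d / 2 := by rw [abs_neg, hhalf]
  have hdiff : |d / 2 - -(d / 2)| = d := by rw [sub_neg_eq_add, add_halves, abs_of_nonneg hd]
  have hle : |1 - α| * (d / 2) ≤ d := by nlinarith [abs_nonneg (1 - α)]
  have key := hf.linear_apply (a := d / 2) (b := -(d / 2)) (by rw [hhalf, hdiff]; linarith)
  rwa [hhalf, hneg, hdiff, max_self, max_eq_left hle] at key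

theorem abs_slope_mul_le_of_affine {α Q : ℝ} (hf : IsSuzukiContraction φ (fun s => α * s + Q))
    {d : ℝ} (hd : 0 ≤ d) : |α| * d ≤ φ d := by
  have hα : 1 - α ≠ 0 := sub_ne_zero.mpr (hf.slope_ne_one hφ).symm
  have hlin : (fun a => α * (a + Q / (1 - α)) + Q - Q / (1 - α)) = fun a => α * a := by
    funext a
    field_simp
    ring
  have hconj := hf.conj_add (Q / (1 - α))
  rw [hlin] at hconj
  exact hconj.abs_slope_mul_le hφ hd

end IsSuzukiContraction

theorem exists_mem_Icc_pred_of_mem_Icc {β : Type*} [LinearOrder β] (y : ℕ → β) {P : ℕ}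
    (hP : 1 ≤ P) {x : β} (hx : x ∈ Set.Icc (y 0) (y P)) :
    ∃ p ∈ Finset.Icc 1 P, x ∈ Set.Icc (y (p - 1)) (y p) := by
  induction P, hP using Nat.le_induction with
  | base => exact ⟨1, by simp, hx⟩
  | succ n hn ih =>
    by_cases hxn : x ≤ y n
    · obtain ⟨p, hp, hxp⟩ := ih ⟨hx.1, hxn⟩
      exact ⟨p, Finset.Icc_subset_Icc_right n.le_succ hp, hxp⟩
    · exact ⟨n + 1, by simp, le_of_not_ge hxn, hx.2⟩

theorem le_of_forall_lt_succ_le {β : Type*} [Preorder β] (y : ℕ → β) {P : ℕ}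
    (hy : ∀ i < P, y i ≤ y (i + 1)) : y 0 ≤ y P := by
  induction P with
  | zero => rfl
  | succ n ih => exact (ih fun i hi => hy i (by omega)).trans (hy n n.lt_succ_self)

section SupDist

variable {A : Set ℝ} {g h : ℝ → ℝ}

theorem abs_sub_le_supDistOn (hA : IsCompact A) (hg : ContinuousOn g A) (hh : ContinuousOn h A)
    {x : ℝ} (hx : x ∈ A) : |g x - h x| ≤ supDistOn A g h := by
  have hbdd := (hA.image_of_continuousOn (hg.sub hh).abs).bddAbove
  rw [Set.image_eq_range] at hbdd
  exact le_ciSup hbdd ⟨x, hx⟩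

theorem supDistOn_le (hA : A.Nonempty) {a : ℝ} (H : ∀ x ∈ A, |g x - h x| ≤ a) :
    supDistOn A g h ≤ a :=
  have := hA.to_subtype
  ciSup_le fun x => H x x.2

end SupDist

theorem RB_operator_stgpc_general (P : ℕ) (hP : 1 ≤ P)
    (y z : ℕ → ℝ) (hy : ∀ i < P, y i < y (i + 1))
    (L : ℕ → ℝ → ℝ) (α : ℕ → ℝ) (q : ℕ → ℝ → ℝ) (F : ℕ → ℝ → ℝ → ℝ)
    (hF : ∀ p x t, F p x t = α p * t + q p x)
    (hLbij : ∀ p ∈ Finset.Icc 1 P,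
      Set.BijOn (L p) (Set.Icc (y 0) (y P)) (Set.Icc (y (p - 1)) (y p)))
    (φ : ℝ → ℝ) (hφ_mono : Monotone φ)
    (hφ_lt : ∀ t > 0, φ t < t)
    (hSuz : ∀ p ∈ Finset.Icc 1 P, ∀ x ∈ Set.Icc (y 0) (y P), ∀ s t : ℝ,
      (1 / 2) * |s - F p x s| ≤ |s - t| →
        |F p x s - F p x t| ≤
          φ (max |s - t| (max |s - F p x s| |t - F p x t|)))
    (C0 : Set (ℝ → ℝ))
    (hC0 : C0 = {h : ℝ → ℝ | ContinuousOn h (Set.Icc (y 0) (y P)) ∧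
      h (y 0) = z 0 ∧ h (y P) = z P})
    (𝕋 : (ℝ → ℝ) → (ℝ → ℝ))
    (h𝕋 : ∀ h ∈ C0, ∀ p ∈ Finset.Icc 1 P, ∀ x ∈ Set.Icc (y 0) (y P),
      𝕋 h (L p x) = F p x (h x)) :
    ∀ g ∈ C0, ∀ h ∈ C0,
      (1 / 2) * supDistOn (Set.Icc (y 0) (y P)) g (𝕋 g) ≤
          supDistOn (Set.Icc (y 0) (y P)) g h →
        supDistOn (Set.Icc (y 0) (y P)) (𝕋 g) (𝕋 h) ≤
          φ (max (supDistOn (Set.Icc (y 0) (y P)) g h)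
              (max (supDistOn (Set.Icc (y 0) (y P)) g (𝕋 g))
                (supDistOn (Set.Icc (y 0) (y P)) h (𝕋 h)))) := by
  intro g hg h hh _
  have hA : (Set.Icc (y 0) (y P)).Nonempty :=
    Set.nonempty_Icc.mpr (le_of_forall_lt_succ_le y fun i hi => (hy i hi).le)
  refine supDistOn_le hA fun x hx => ?_
  obtain ⟨p, hp, hxp⟩ := exists_mem_Icc_pred_of_mem_Icc y hP hx
  obtain ⟨w, hw, rfl⟩ := (hLbij p hp).surjOn hxp
  have hFw : IsSuzukiContraction φ (fun s => α p * s + q p w) := by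
    simpa only [IsSuzukiContraction, hF] using hSuz p hp w hw
  have hgh : |g w - h w| ≤ supDistOn (Set.Icc (y 0) (y P)) g h :=
    abs_sub_le_supDistOn isCompact_Icc (hC0 ▸ hg).1 (hC0 ▸ hh).1 hw
  calc |𝕋 g (L p w) - 𝕋 h (L p w)| = |α p| * |g w - h w| := by
        rw [h𝕋 g hg p hp w hw, h𝕋 h hh p hp w hw, hF, hF, ← abs_mul]
        ring_nf
    _ ≤ φ |g w - h w| := hFw.abs_slope_mul_le_of_affine hφ_lt (abs_nonneg _)
    _ ≤ φ _ := hφ_mono (hgh.trans (le_max_left _ _))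

/-- Key estimate in the proof of Theorem 3.12 of the paper: the
Read–Bajraktarević operator `𝕋` associated with maps `F_p(y,z) = α_p z + q_p(y)`
that are Suzuki-type generalized φ-contractions in the second variable is itself
a Suzuki-type generalized φ-contraction on `(𝒞₀(A), ‖·‖_∞)`. -/
theorem RB_operator_stgpc (P : ℕ) (hP : 1 ≤ P)
    (y z : ℕ → ℝ) (hy : ∀ i < P, y i < y (i + 1))
    (L : ℕ → ℝ → ℝ) (α : ℕ → ℝ) (q : ℕ → ℝ → ℝ) (F : ℕ → ℝ → ℝ → ℝ)
    (hF : ∀ p x t, F p x t = α p * t + q p x)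
    (hq : ∀ p ∈ Finset.Icc 1 P, ContinuousOn (q p) (Set.Icc (y 0) (y P)))
    (hLbij : ∀ p ∈ Finset.Icc 1 P,
      Set.BijOn (L p) (Set.Icc (y 0) (y P)) (Set.Icc (y (p - 1)) (y p)))
    (hLcont : ∀ p ∈ Finset.Icc 1 P, ContinuousOn (L p) (Set.Icc (y 0) (y P)))
    (hLend : ∀ p ∈ Finset.Icc 1 P, L p (y 0) = y (p - 1) ∧ L p (y P) = y p)
    (hFend : ∀ p ∈ Finset.Icc 1 P, F p (y 0) (z 0) = z (p - 1) ∧ F p (y P) (z P) = z p)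
    (φ : ℝ → ℝ) (hφ_mono : Monotone φ)
    (hφ_nonneg : ∀ t ≥ 0, 0 ≤ φ t)
    (hφ_lt : ∀ t > 0, φ t < t)
    (hφ_limsup : ∀ t > 0, Filter.limsup φ (nhdsWithin t (Set.Ioi t)) < t)
    (hSuz : ∀ p ∈ Finset.Icc 1 P, ∀ x ∈ Set.Icc (y 0) (y P), ∀ s t : ℝ,
      (1 / 2) * |s - F p x s| ≤ |s - t| →
        |F p x s - F p x t| ≤
          φ (max |s - t| (max |s - F p x s| |t - F p x t|)))
    (C0 : Set (ℝ → ℝ))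
    (hC0 : C0 = {h : ℝ → ℝ | ContinuousOn h (Set.Icc (y 0) (y P)) ∧
      h (y 0) = z 0 ∧ h (y P) = z P})
    (𝕋 : (ℝ → ℝ) → (ℝ → ℝ))
    (h𝕋mem : ∀ h ∈ C0, 𝕋 h ∈ C0)
    (h𝕋 : ∀ h ∈ C0, ∀ p ∈ Finset.Icc 1 P, ∀ x ∈ Set.Icc (y 0) (y P),
      𝕋 h (L p x) = F p x (h x)) :
    ∀ g ∈ C0, ∀ h ∈ C0,
      (1 / 2) * supDistOn (Set.Icc (y 0) (y P)) g (𝕋 g) ≤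
          supDistOn (Set.Icc (y 0) (y P)) g h →
        supDistOn (Set.Icc (y 0) (y P)) (𝕋 g) (𝕋 h) ≤
          φ (max (supDistOn (Set.Icc (y 0) (y P)) g h)
              (max (supDistOn (Set.Icc (y 0) (y P)) g (𝕋 g))
                (supDistOn (Set.Icc (y 0) (y P)) h (𝕋 h)))) :=
  RB_operator_stgpc_general P hP y z hy L α q F hF hLbij φ hφ_mono hφ_lt hSuz C0 hC0 𝕋 h𝕋
end

section
/- Let y_0 < y_1 < ⋯ < y_P be real numbers, A = [y_0,y_P], A_p = [y_{p−1},y_p], and let z_0, …, z_P be real numbers. For p = 1,…,P let L_p : A → A_p be a homeomorphism with L_p(y_0) = y_{p−1} and L_p(y_P) = y_p, and let F_p(y,z) = α_p·z + q_p(y) with q_p : A → ℝ continuous, F_p(y_0,z_0) = z_{p−1}, F_p(y_P,z_P) = z_p. Let φ : [0,∞) → [0,∞) be nondecreasing with φ(t) < t and limsup_{s→t⁺} φ(s) < t for all t > 0, and suppose each F_p is a Suzuki-type generalized φ-contraction in the second variable: for all y ∈ A and z,t ∈ ℝ, (1/2)·|z − F_p(y,z)| ≤ |z − t| implies |F_p(y,z)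 − F_p(y,t)| ≤ φ(max{|z−t|, |z − F_p(y,z)|, |t − F_p(y,t)|}). Then there exists a unique continuous function g : A → ℝ with g(y_0) = z_0 and g(y_P) = z_P satisfying g(y) = F_p(L_p^{−1}(y), g(L_p^{−1}(y))) for all y ∈ A_p and all p = 1,…,P; equivalently, g(L_p(y)) = F_p(y, g(y)) for all y ∈ A and p = 1,…,P. -/
/-!
Evaluating the Suzuki condition for the affine map `t ↦ α_p t + q_p(x)` at two points on either
side of its fixed point forces `|α_p| < 1`. Hence the Read–Bajraktarević operator
`(𝕋h)(L_p x) = F_p(x, h x)` is a Banach contraction with constant `max_p |α_p|` on `𝒞₀(A)`; the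
matching conditions `F_p(y_P, z_P) = z_p = F_{p+1}(y_0, z_0)` make `𝕋h` well defined and continuous
at the knots `y_p`, and its fixed point is the fractal interpolation function.
-/

open Set Function
open scoped NNReal

def IsSuzukiPhiContraction {X : Type*} [PseudoMetricSpace X] (φ : ℝ → ℝ) (f : X → X) : Prop :=
  ∀ s t, 1 / 2 * dist s (f s) ≤ dist s t →
    dist (f s) (f t) ≤ φ (max (dist s t) (max (dist s (f s)) (dist t (f t))))

theorem IsSuzukiPhiContraction.abs_lt_one_of_affine {φ : ℝ → ℝ} {f : ℝ → ℝ} {a c : ℝ}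
    (hf : IsSuzukiPhiContraction φ f) (hφ : ∀ t > 0, φ t < t) (haff : ∀ s, f s = a * s + c) :
    |a| < 1 := by
  by_contra! ha
  -- For `a ≠ 1` take `s, t` at distances `1` and `|a|` on either side of the fixed point of `f`:
  -- then every term of the Suzuki maximum is at most `|a| * |s - t| = |f s - f t|`.
  obtain ⟨s, t, hst, hs, hs', ht⟩ : ∃ s t, s ≠ t ∧ |s - f s| ≤ 2 * |s - t| ∧
      |s - f s| ≤ |a| * |s - t| ∧ |t - f t| ≤ |a| * |s - t| := by
    rcases eq_or_ne a 1 with rfl | ha1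
    · have e : ∀ s, s - f s = -c := fun s => by rw [haff]; ring
      refine ⟨0, |c| + 1, by positivity, ?_⟩
      simp only [e, abs_neg, zero_sub, abs_one, one_mul, abs_of_pos (by positivity : 0 < |c| + 1)]
      exact ⟨by linarith [abs_nonneg c], by linarith, by linarith⟩
    · obtain ⟨z, hz⟩ : ∃ z, a * z + c = z :=
        ⟨c / (1 - a), by field_simp [sub_ne_zero.2 ha1.symm]; ring⟩
      have e : ∀ u, z + u - f (z + u) = (1 - a) * u := fun u => by
        rw [haff]; linear_combination -hz
      have hd : z + 1 - (z + -|a|) = 1 + |a| := by ring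
      have h1a : |1 - a| ≤ 1 + |a| := by simpa using abs_sub (1 : ℝ) a
      refine ⟨z + 1, z + -|a|, by linarith [abs_nonneg a], ?_⟩
      simp only [e, hd, abs_mul, abs_neg, abs_abs, mul_one,
        abs_of_pos (by positivity : 0 < 1 + |a|)]
      exact ⟨by linarith [abs_nonneg a], by nlinarith, by nlinarith [abs_nonneg a]⟩
  have hpos : 0 < |s - t| := abs_pos.2 (sub_ne_zero.2 hst)
  have hM : max |s - t| (max |s - f s| |t - f t|) ≤ |a| * |s - t| :=
    max_le (le_mul_of_one_le_left hpos.le ha) (max_le hs' ht)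
  have hsuz := hf s t (by rw [Real.dist_eq, Real.dist_eq]; linarith)
  simp only [Real.dist_eq] at hsuz
  have hfst : |f s - f t| = |a| * |s - t| := by rw [haff, haff, ← abs_mul]; congr 1; ring
  have hφM := hφ (max |s - t| (max |s - f s| |t - f t|)) (hpos.trans_le (le_max_left _ _))
  linarith

theorem Set.BijOn.continuousOn_invFunOn {X Y : Type*} [TopologicalSpace X] [TopologicalSpace Y]
    [T2Space Y] [Nonempty X] {f : X → Y} {s : Set X} {t : Set Y} (hf : BijOn f s t)
    (hs : IsCompact s) (hfc : ContinuousOn f s) : ContinuousOn (invFunOn f s) t := by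
  refine continuousOn_iff_isClosed.2 fun C hC => ⟨f '' (C ∩ s), ?_, ?_⟩
  · exact ((hs.inter_left hC).image_of_continuousOn (hfc.mono inter_subset_right)).isClosed
  · ext v
    constructor
    · rintro ⟨hvC, hvt⟩
      exact ⟨⟨_, ⟨hvC, hf.surjOn.mapsTo_invFunOn hvt⟩, hf.surjOn.rightInvOn_invFunOn hvt⟩, hvt⟩
    · rintro ⟨⟨x, ⟨hxC, hxs⟩, rfl⟩, hvt⟩
      exact ⟨by rwa [mem_preimage, hf.injOn.leftInvOn_invFunOn hxs], hvt⟩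

/-- The space `𝒞₀` of the paper, as a predicate on functions. -/
def PinnedContinuousOn {X : Type*} [TopologicalSpace X] (s : Set X) (a b : X) (za zb : ℝ)
    (h : X → ℝ) : Prop :=
  ContinuousOn h s ∧ h a = za ∧ h b = zb

theorem exists_unique_fixedPoint_pinnedContinuousOn {X : Type*} [TopologicalSpace X] {s : Set X}
    {a b : X} {za zb : ℝ} (hs : IsCompact s) (ha : a ∈ s) (hb : b ∈ s)
    (hne : ∃ h, PinnedContinuousOn s a b za zb h) (Φ : (X → ℝ) → X → ℝ) {K : ℝ≥0} (hK : K < 1)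
    (hmaps : ∀ h, PinnedContinuousOn s a b za zb h → PinnedContinuousOn s a b za zb (Φ h))
    (hlip : ∀ h h' δ, (∀ x ∈ s, |h x - h' x| ≤ δ) → ∀ x ∈ s, |Φ h x - Φ h' x| ≤ K * δ) :
    ∃ g, (PinnedContinuousOn s a b za zb g ∧ EqOn (Φ g) g s) ∧
      ∀ g', PinnedContinuousOn s a b za zb g' → EqOn (Φ g') g' s → EqOn g' g s := by
  have := isCompact_iff_compactSpace.mp hs
  let S : Set C(s, ℝ) := {f | f ⟨a, ha⟩ = za ∧ f ⟨b, hb⟩ = zb}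
  have hS : IsClosed S := (isClosed_eq (continuous_eval_const _) continuous_const).inter
    (isClosed_eq (continuous_eval_const _) continuous_const)
  have : CompleteSpace S := hS.completeSpace_coe
  let ext (f : C(s, ℝ)) : X → ℝ := extend Subtype.val f 0
  have ext_apply (f : C(s, ℝ)) (x : s) : ext f x = f x := Subtype.val_injective.extend_apply _ _ _
  have ext_pinned (f : S) : PinnedContinuousOn s a b za zb (ext f) := by
    refine ⟨continuousOn_iff_continuous_domRestrict.2 ?_, ?_, ?_⟩
    · convert f.1.continuous using 1
      exact funext (ext_apply f)
    · exact (ext_apply f ⟨a, ha⟩).trans f.2.1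
    · exact (ext_apply f ⟨b, hb⟩).trans f.2.2
  let res (g : X → ℝ) (hg : PinnedContinuousOn s a b za zb g) : S :=
    ⟨⟨s.domRestrict g, hg.1.domRestrict⟩, hg.2⟩
  let T (f : S) : S := res (Φ (ext f)) (hmaps _ (ext_pinned f))
  have hT : ContractingWith K T := by
    refine ⟨hK, LipschitzWith.of_dist_le_mul fun f f' => ?_⟩
    rw [Subtype.dist_eq, ContinuousMap.dist_le (by positivity)]
    intro x
    refine hlip _ _ _ (fun w hw => ?_) x x.2
    rw [ext_apply f ⟨w, hw⟩, ext_apply f' ⟨w, hw⟩, ← Real.dist_eq, Subtype.dist_eq]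
    exact ContinuousMap.dist_apply_le_dist _
  obtain ⟨h₀, hh₀⟩ := hne
  have : Nonempty S := ⟨res h₀ hh₀⟩
  obtain ⟨f, hf⟩ : ∃ f, IsFixedPt T f := ⟨_, hT.fixedPoint_isFixedPt⟩
  refine ⟨ext f, ⟨ext_pinned f, fun x hx => ?_⟩, fun g' hg' hfix x hx => ?_⟩
  · exact congr($hf.1 ⟨x, hx⟩).trans (ext_apply _ ⟨x, hx⟩).symm
  · have hlocal : EqOn (Φ (ext (res g' hg'))) (Φ g') s := fun w hw => by
      have := hlip (ext (res g' hg')) g' 0 (fun v hv => by simp [ext_apply _ ⟨v, hv⟩, res]) w hw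
      simpa [sub_eq_zero] using this
    have hg'T : IsFixedPt T (res g' hg') := by
      ext w
      exact (hlocal w.2).trans (hfix w.2)
    rw [ext_apply _ ⟨x, hx⟩, ← hT.fixedPoint_unique' hg'T hf]
    rfl

section ReadBajraktarevic

variable {P : ℕ} {y z : ℕ → ℝ} {L : ℕ → ℝ → ℝ} {α : ℕ → ℝ} {q : ℕ → ℝ → ℝ}
  {F : ℕ → ℝ → ℝ → ℝ} {h : ℝ → ℝ} {p : ℕ} {u : ℝ}

noncomputable def pieceIndex (y : ℕ → ℝ) (u : ℝ) : ℕ := max 1 (sInf {p | u ≤ y p})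

noncomputable def rbPiece (P : ℕ) (y : ℕ → ℝ) (L : ℕ → ℝ → ℝ) (F : ℕ → ℝ → ℝ → ℝ)
    (h : ℝ → ℝ) (p : ℕ) (u : ℝ) : ℝ :=
  F p (invFunOn (L p) (Icc (y 0) (y P)) u) (h (invFunOn (L p) (Icc (y 0) (y P)) u))

/-- The Read–Bajraktarević operator `𝕋`: at `u` it uses the first piece `[y (p-1), y p]` containing
`u`; at a knot shared by two pieces the choice is immaterial (`rbOperator_eq_rbPiece`). -/
noncomputable def rbOperator (P : ℕ) (y : ℕ → ℝ) (L : ℕ → ℝ → ℝ) (F : ℕ → ℝ → ℝ → ℝ)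
    (h : ℝ → ℝ) (u : ℝ) : ℝ :=
  rbPiece P y L F h (pieceIndex y u) u

theorem Icc_pred_subset_Icc (hy : MonotoneOn y (Iic P)) (hp : p ∈ Finset.Icc 1 P) :
    Icc (y (p - 1)) (y p) ⊆ Icc (y 0) (y P) := by
  obtain ⟨-, hpP⟩ := Finset.mem_Icc.1 hp
  exact Icc_subset_Icc (hy (by simp) (by rw [mem_Iic]; omega) (Nat.zero_le _)) (hy hpP self_mem_Iic hpP)

theorem pieceIndex_spec (hP : 1 ≤ P) (hy : MonotoneOn y (Iic P)) (hu : u ∈ Icc (y 0) (y P)) :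
    pieceIndex y u ∈ Finset.Icc 1 P ∧ u ∈ Icc (y (pieceIndex y u - 1)) (y (pieceIndex y u)) := by
  have hP' : P ∈ {p | u ≤ y p} := hu.2
  rcases Nat.eq_zero_or_pos (sInf {p | u ≤ y p}) with h0 | hpos
  · have hu0 : u ≤ y 0 := h0 ▸ Nat.sInf_mem ⟨P, hP'⟩
    have hidx : pieceIndex y u = 1 := by simp [pieceIndex, h0]
    rw [hidx, Finset.mem_Icc]
    exact ⟨⟨le_rfl, hP⟩, hu.1, hu0.trans (hy (by simp) hP (Nat.zero_le 1))⟩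
  · have hidx : pieceIndex y u = sInf {p | u ≤ y p} := max_eq_right hpos
    have hlt : ¬u ≤ y (sInf {p | u ≤ y p} - 1) := Nat.notMem_of_lt_sInf (Nat.sub_one_lt_of_lt hpos)
    rw [hidx, Finset.mem_Icc]
    exact ⟨⟨hpos, Nat.sInf_le hP'⟩, (not_le.1 hlt).le, Nat.sInf_mem ⟨P, hP'⟩⟩

theorem rbPiece_eq_of_le (hy : StrictMonoOn y (Iic P))
    (hLbij : ∀ p ∈ Finset.Icc 1 P, BijOn (L p) (Icc (y 0) (y P)) (Icc (y (p - 1)) (y p)))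
    (hLend : ∀ p ∈ Finset.Icc 1 P, L p (y 0) = y (p - 1) ∧ L p (y P) = y p)
    (hFend : ∀ p ∈ Finset.Icc 1 P, F p (y 0) (z 0) = z (p - 1) ∧ F p (y P) (z P) = z p)
    (hh₀ : h (y 0) = z 0) (hhP : h (y P) = z P) {p p' : ℕ} (hp : p ∈ Finset.Icc 1 P)
    (hp' : p' ∈ Finset.Icc 1 P) (hpp' : p ≤ p') (hu : u ∈ Icc (y (p - 1)) (y p))
    (hu' : u ∈ Icc (y (p' - 1)) (y p')) :
    rbPiece P y L F h p' u = rbPiece P y L F h p u := by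
  obtain ⟨-, hpP⟩ := Finset.mem_Icc.1 hp
  obtain ⟨-, hp'P⟩ := Finset.mem_Icc.1 hp'
  rcases hpp'.eq_or_lt with rfl | hlt
  · rfl
  -- distinct pieces meet only at `u = y p = y (p' - 1)`, where both sides reduce to `z p`
  have hp'p : p' - 1 ∈ Iic P := by rw [mem_Iic]; omega
  have hup : u = y p := le_antisymm hu.2 ((hy.monotoneOn hpP hp'p (by omega)).trans hu'.1)
  have hpp : p' - 1 = p := by
    by_contra hne
    have := hy hpP hp'p (by omega)
    linarith [hu'.1]
  have hyP : y 0 ≤ y P := hy.monotoneOn (by simp) self_mem_Iic (Nat.zero_le P)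
  have e : invFunOn (L p) (Icc (y 0) (y P)) u = y P := by
    rw [hup, ← (hLend p hp).2]
    exact (hLbij p hp).injOn.leftInvOn_invFunOn (right_mem_Icc.2 hyP)
  have e' : invFunOn (L p') (Icc (y 0) (y P)) u = y 0 := by
    rw [hup, ← hpp, ← (hLend p' hp').1]
    exact (hLbij p' hp').injOn.leftInvOn_invFunOn (left_mem_Icc.2 hyP)
  simp only [rbPiece, e, e', hh₀, hhP, (hFend p hp).2, (hFend p' hp').1, hpp]

theorem rbOperator_eq_rbPiece (hP : 1 ≤ P) (hy : StrictMonoOn y (Iic P))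
    (hLbij : ∀ p ∈ Finset.Icc 1 P, BijOn (L p) (Icc (y 0) (y P)) (Icc (y (p - 1)) (y p)))
    (hLend : ∀ p ∈ Finset.Icc 1 P, L p (y 0) = y (p - 1) ∧ L p (y P) = y p)
    (hFend : ∀ p ∈ Finset.Icc 1 P, F p (y 0) (z 0) = z (p - 1) ∧ F p (y P) (z P) = z p)
    (hh₀ : h (y 0) = z 0) (hhP : h (y P) = z P) (hp : p ∈ Finset.Icc 1 P)
    (hu : u ∈ Icc (y (p - 1)) (y p)) :
    rbOperator P y L F h u = rbPiece P y L F h p u := by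
  obtain ⟨hi, hui⟩ :=
    pieceIndex_spec hP hy.monotoneOn (Icc_pred_subset_Icc hy.monotoneOn hp hu)
  rcases le_total p (pieceIndex y u) with hle | hle
  · exact rbPiece_eq_of_le hy hLbij hLend hFend hh₀ hhP hp hi hle hu hui
  · exact (rbPiece_eq_of_le hy hLbij hLend hFend hh₀ hhP hi hp hle hui hu).symm

theorem continuousOn_rbPiece (hF : ∀ x t, F p x t = α p * t + q p x)
    (hq : ContinuousOn (q p) (Icc (y 0) (y P)))
    (hLbij : BijOn (L p) (Icc (y 0) (y P)) (Icc (y (p - 1)) (y p)))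
    (hLcont : ContinuousOn (L p) (Icc (y 0) (y P))) (hh : ContinuousOn h (Icc (y 0) (y P))) :
    ContinuousOn (rbPiece P y L F h p) (Icc (y (p - 1)) (y p)) := by
  have hinv := hLbij.continuousOn_invFunOn isCompact_Icc hLcont
  have hmaps := hLbij.surjOn.mapsTo_invFunOn
  exact ((continuousOn_const.mul (hh.comp hinv hmaps)).add (hq.comp hinv hmaps)).congr
    fun u _ => hF _ _

theorem rbOperator_pinned (hP : 1 ≤ P) (hy : StrictMonoOn y (Iic P))
    (hF : ∀ p x t, F p x t = α p * t + q p x)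
    (hq : ∀ p ∈ Finset.Icc 1 P, ContinuousOn (q p) (Icc (y 0) (y P)))
    (hLbij : ∀ p ∈ Finset.Icc 1 P, BijOn (L p) (Icc (y 0) (y P)) (Icc (y (p - 1)) (y p)))
    (hLcont : ∀ p ∈ Finset.Icc 1 P, ContinuousOn (L p) (Icc (y 0) (y P)))
    (hLend : ∀ p ∈ Finset.Icc 1 P, L p (y 0) = y (p - 1) ∧ L p (y P) = y p)
    (hFend : ∀ p ∈ Finset.Icc 1 P, F p (y 0) (z 0) = z (p - 1) ∧ F p (y P) (z P) = z p)
    (hh : PinnedContinuousOn (Icc (y 0) (y P)) (y 0) (y P) (z 0) (z P) h) :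
    PinnedContinuousOn (Icc (y 0) (y P)) (y 0) (y P) (z 0) (z P) (rbOperator P y L F h) := by
  obtain ⟨hc, hh₀, hhP⟩ := hh
  have hyP : y 0 ≤ y P := hy.monotoneOn (by simp) self_mem_Iic (Nat.zero_le P)
  have h1 : 1 ∈ Finset.Icc 1 P := Finset.mem_Icc.2 ⟨le_rfl, hP⟩
  have hP' : P ∈ Finset.Icc 1 P := Finset.mem_Icc.2 ⟨hP, le_rfl⟩
  refine ⟨?_, ?_, ?_⟩
  · have hcover : Icc (y 0) (y P) = ⋃ p : Finset.Icc 1 P, Icc (y (p - 1)) (y p) := by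
      refine Subset.antisymm (fun u hu => ?_)
        (iUnion_subset fun p => Icc_pred_subset_Icc hy.monotoneOn p.2)
      obtain ⟨hi, hui⟩ := pieceIndex_spec hP hy.monotoneOn hu
      exact mem_iUnion.2 ⟨⟨_, hi⟩, hui⟩
    rw [hcover]
    refine (locallyFinite_of_finite _).continuousOn_iUnion (fun _ => isClosed_Icc) fun ⟨p, hp⟩ => ?_
    exact (continuousOn_rbPiece (hF p) (hq p hp) (hLbij p hp) (hLcont p hp) hc).congr
      fun u hu => rbOperator_eq_rbPiece hP hy hLbij hLend hFend hh₀ hhP hp hu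
  · have hinv : invFunOn (L 1) (Icc (y 0) (y P)) (y 0) = y 0 := by
      have := (hLbij 1 h1).injOn.leftInvOn_invFunOn (left_mem_Icc.2 hyP)
      rwa [(hLend 1 h1).1, Nat.sub_self] at this
    rw [rbOperator_eq_rbPiece hP hy hLbij hLend hFend hh₀ hhP h1
      ⟨le_rfl, hy.monotoneOn (by simp) (by simpa using hP) (Nat.zero_le 1)⟩]
    simp only [rbPiece, hinv, hh₀, (hFend 1 h1).1, Nat.sub_self]
  · have hinv : invFunOn (L P) (Icc (y 0) (y P)) (y P) = y P := by
      have := (hLbij P hP').injOn.leftInvOn_invFunOn (right_mem_Icc.2 hyP)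
      rwa [(hLend P hP').2] at this
    rw [rbOperator_eq_rbPiece hP hy hLbij hLend hFend hh₀ hhP hP'
      ⟨hy.monotoneOn (by simp) self_mem_Iic (Nat.sub_le P 1), le_rfl⟩]
    simp only [rbPiece, hinv, hhP, (hFend P hP').2]

theorem abs_rbOperator_sub_le (hP : 1 ≤ P) (hy : MonotoneOn y (Iic P))
    (hF : ∀ p x t, F p x t = α p * t + q p x)
    (hLbij : ∀ p ∈ Finset.Icc 1 P, BijOn (L p) (Icc (y 0) (y P)) (Icc (y (p - 1)) (y p)))
    {K : ℝ} (hα : ∀ p ∈ Finset.Icc 1 P, |α p| ≤ K) {h h' : ℝ → ℝ} {δ : ℝ}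
    (hδ : ∀ x ∈ Icc (y 0) (y P), |h x - h' x| ≤ δ) (hu : u ∈ Icc (y 0) (y P)) :
    |rbOperator P y L F h u - rbOperator P y L F h' u| ≤ K * δ := by
  obtain ⟨hp, hup⟩ := pieceIndex_spec hP hy hu
  set p := pieceIndex y u
  set x := invFunOn (L p) (Icc (y 0) (y P)) u
  have hx : x ∈ Icc (y 0) (y P) := (hLbij p hp).surjOn.mapsTo_invFunOn hup
  calc |rbOperator P y L F h u - rbOperator P y L F h' u| = |α p| * |h x - h' x| := by
        show |F p x (h x) - F p x (h' x)| = _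
        rw [hF, hF, ← abs_mul]
        congr 1
        ring
    _ ≤ K * δ := mul_le_mul (hα p hp) (hδ x hx) (abs_nonneg _) ((abs_nonneg _).trans (hα p hp))

theorem eqOn_rbOperator_iff (hP : 1 ≤ P) (hy : StrictMonoOn y (Iic P))
    (hLbij : ∀ p ∈ Finset.Icc 1 P, BijOn (L p) (Icc (y 0) (y P)) (Icc (y (p - 1)) (y p)))
    (hLend : ∀ p ∈ Finset.Icc 1 P, L p (y 0) = y (p - 1) ∧ L p (y P) = y p)
    (hFend : ∀ p ∈ Finset.Icc 1 P, F p (y 0) (z 0) = z (p - 1) ∧ F p (y P) (z P) = z p)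
    (hh₀ : h (y 0) = z 0) (hhP : h (y P) = z P) :
    EqOn (rbOperator P y L F h) h (Icc (y 0) (y P)) ↔
      ∀ p ∈ Finset.Icc 1 P, ∀ x ∈ Icc (y 0) (y P), h (L p x) = F p x (h x) := by
  constructor
  · intro hfix p hp x hx
    have hLx := (hLbij p hp).mapsTo hx
    rw [← hfix (Icc_pred_subset_Icc hy.monotoneOn hp hLx),
      rbOperator_eq_rbPiece hP hy hLbij hLend hFend hh₀ hhP hp hLx, rbPiece,
      (hLbij p hp).injOn.leftInvOn_invFunOn hx]
  · intro heq u hu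
    obtain ⟨hp, hup⟩ := pieceIndex_spec hP hy.monotoneOn hu
    have hx := (hLbij _ hp).surjOn.mapsTo_invFunOn hup
    rw [rbOperator, rbPiece, ← heq _ hp _ hx, (hLbij _ hp).surjOn.rightInvOn_invFunOn hup]

end ReadBajraktarevic

theorem exists_unique_FIF_stgpc_general (P : ℕ) (hP : 1 ≤ P)
    (y z : ℕ → ℝ) (hy : ∀ i < P, y i < y (i + 1))
    (L : ℕ → ℝ → ℝ) (α : ℕ → ℝ) (q : ℕ → ℝ → ℝ) (F : ℕ → ℝ → ℝ → ℝ)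
    (hF : ∀ p x t, F p x t = α p * t + q p x)
    (hq : ∀ p ∈ Finset.Icc 1 P, ContinuousOn (q p) (Set.Icc (y 0) (y P)))
    (hLbij : ∀ p ∈ Finset.Icc 1 P,
      Set.BijOn (L p) (Set.Icc (y 0) (y P)) (Set.Icc (y (p - 1)) (y p)))
    (hLcont : ∀ p ∈ Finset.Icc 1 P, ContinuousOn (L p) (Set.Icc (y 0) (y P)))
    (hLend : ∀ p ∈ Finset.Icc 1 P, L p (y 0) = y (p - 1) ∧ L p (y P) = y p)
    (hFend : ∀ p ∈ Finset.Icc 1 P, F p (y 0) (z 0) = z (p - 1) ∧ F p (y P) (z P) = z p)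
    (φ : ℝ → ℝ)
    (hφ_lt : ∀ t > 0, φ t < t)
    (hSuz : ∀ p ∈ Finset.Icc 1 P, ∀ x ∈ Set.Icc (y 0) (y P), ∀ s t : ℝ,
      (1 / 2) * |s - F p x s| ≤ |s - t| →
        |F p x s - F p x t| ≤
          φ (max |s - t| (max |s - F p x s| |t - F p x t|))) :
    ∃ g : ℝ → ℝ,
      (ContinuousOn g (Set.Icc (y 0) (y P)) ∧ g (y 0) = z 0 ∧ g (y P) = z P ∧
        ∀ p ∈ Finset.Icc 1 P, ∀ x ∈ Set.Icc (y 0) (y P), g (L p x) = F p x (g x)) ∧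
      ∀ g' : ℝ → ℝ,
        (ContinuousOn g' (Set.Icc (y 0) (y P)) ∧ g' (y 0) = z 0 ∧ g' (y P) = z P ∧
          ∀ p ∈ Finset.Icc 1 P, ∀ x ∈ Set.Icc (y 0) (y P), g' (L p x) = F p x (g' x)) →
        Set.EqOn g' g (Set.Icc (y 0) (y P)) := by
  have hy' : StrictMonoOn y (Iic P) := strictMonoOn_Iic_of_lt_succ fun m hm => hy m hm
  have hyP : y 0 < y P := hy' (by simp) self_mem_Iic (by omega)
  have hα : ∀ p ∈ Finset.Icc 1 P, |α p| < 1 := fun p hp =>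
    IsSuzukiPhiContraction.abs_lt_one_of_affine (by
      simpa only [IsSuzukiPhiContraction, Real.dist_eq] using hSuz p hp _ (left_mem_Icc.2 hyP.le))
      hφ_lt (hF p (y 0))
  set K : ℝ≥0 := (Finset.Icc 1 P).sup fun p => ‖α p‖₊
  have hK : K < 1 := (Finset.sup_lt_iff one_pos).2 fun p hp => by
    simpa [← NNReal.coe_lt_coe] using hα p hp
  have hαK : ∀ p ∈ Finset.Icc 1 P, |α p| ≤ K := fun p hp => by
    exact_mod_cast Finset.le_sup (f := fun p => ‖α p‖₊) hp
  have hne : ∃ h, PinnedContinuousOn (Icc (y 0) (y P)) (y 0) (y P) (z 0) (z P) h :=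
    ⟨fun x => z 0 + (z P - z 0) * ((x - y 0) / (y P - y 0)), by fun_prop, by simp,
      by field_simp [sub_ne_zero.2 hyP.ne']; ring⟩
  obtain ⟨g, ⟨hg, hfix⟩, huniq⟩ := exists_unique_fixedPoint_pinnedContinuousOn isCompact_Icc
    (left_mem_Icc.2 hyP.le) (right_mem_Icc.2 hyP.le) hne (rbOperator P y L F) hK
    (fun _ => rbOperator_pinned hP hy' hF hq hLbij hLcont hLend hFend)
    (fun _ _ _ hδ _ hu => abs_rbOperator_sub_le hP hy'.monotoneOn hF hLbij hαK hδ hu)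
  refine ⟨g, ⟨hg.1, hg.2.1, hg.2.2,
    (eqOn_rbOperator_iff hP hy' hLbij hLend hFend hg.2.1 hg.2.2).1 hfix⟩, ?_⟩
  rintro g' ⟨hc, hg'₀, hg'P, heq⟩
  exact huniq g' ⟨hc, hg'₀, hg'P⟩ ((eqOn_rbOperator_iff hP hy' hLbij hLend hFend hg'₀ hg'P).2 heq)

/-- Theorem 3.12 of the paper: existence and uniqueness of the fractal
interpolation function generated by an IFS whose maps
`F_p(y,z) = α_p z + q_p(y)` are Suzuki-type generalized φ-contractions in the
second variable. There is a unique continuous `g : A → ℝ` with `g(y_0) = z_0`,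
`g(y_P) = z_P` and `g(L_p(x)) = F_p(x, g(x))` for all `x ∈ A`, `p = 1,…,P`. -/
theorem exists_unique_FIF_stgpc (P : ℕ) (hP : 1 ≤ P)
    (y z : ℕ → ℝ) (hy : ∀ i < P, y i < y (i + 1))
    (L : ℕ → ℝ → ℝ) (α : ℕ → ℝ) (q : ℕ → ℝ → ℝ) (F : ℕ → ℝ → ℝ → ℝ)
    (hF : ∀ p x t, F p x t = α p * t + q p x)
    (hq : ∀ p ∈ Finset.Icc 1 P, ContinuousOn (q p) (Set.Icc (y 0) (y P)))
    (hLbij : ∀ p ∈ Finset.Icc 1 P,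
      Set.BijOn (L p) (Set.Icc (y 0) (y P)) (Set.Icc (y (p - 1)) (y p)))
    (hLcont : ∀ p ∈ Finset.Icc 1 P, ContinuousOn (L p) (Set.Icc (y 0) (y P)))
    (hLend : ∀ p ∈ Finset.Icc 1 P, L p (y 0) = y (p - 1) ∧ L p (y P) = y p)
    (hFend : ∀ p ∈ Finset.Icc 1 P, F p (y 0) (z 0) = z (p - 1) ∧ F p (y P) (z P) = z p)
    (φ : ℝ → ℝ) (hφ_mono : Monotone φ)
    (hφ_nonneg : ∀ t ≥ 0, 0 ≤ φ t)
    (hφ_lt : ∀ t > 0, φ t < t)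
    (hφ_limsup : ∀ t > 0, Filter.limsup φ (nhdsWithin t (Set.Ioi t)) < t)
    (hSuz : ∀ p ∈ Finset.Icc 1 P, ∀ x ∈ Set.Icc (y 0) (y P), ∀ s t : ℝ,
      (1 / 2) * |s - F p x s| ≤ |s - t| →
        |F p x s - F p x t| ≤
          φ (max |s - t| (max |s - F p x s| |t - F p x t|))) :
    ∃ g : ℝ → ℝ,
      (ContinuousOn g (Set.Icc (y 0) (y P)) ∧ g (y 0) = z 0 ∧ g (y P) = z P ∧
        ∀ p ∈ Finset.Icc 1 P, ∀ x ∈ Set.Icc (y 0) (y P), g (L p x) = F p x (g x)) ∧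
      ∀ g' : ℝ → ℝ,
        (ContinuousOn g' (Set.Icc (y 0) (y P)) ∧ g' (y 0) = z 0 ∧ g' (y P) = z P ∧
          ∀ p ∈ Finset.Icc 1 P, ∀ x ∈ Set.Icc (y 0) (y P), g' (L p x) = F p x (g' x)) →
        Set.EqOn g' g (Set.Icc (y 0) (y P)) :=
  exists_unique_FIF_stgpc_general P hP y z hy L α q F hF hq hLbij hLcont hLend hFend φ hφ_lt hSuz
end

section
/- Let y_0 < y_1 < ⋯ < y_P be real numbers, A = [y_0,y_P], A_p = [y_{p−1},y_p], let L_p : A → A_p be homeomorphisms with L_p(y_0) = y_{p−1}, L_p(y_P) = y_p, let f, b, g^α : A → ℝ be continuous, and let α_1,…,α_P be reals with ‖α‖_∞ = max_p |α_p| < 1. If g^α satisfies the self-referential equation g^α(y) = f(y) + α_p·(g^α(L_p^{−1}(y)) − b(L_p^{−1}(y))) for all y ∈ A_p and p = 1,…,P, then ‖g^α − f‖_∞ ≤ (‖α‖_∞/(1 − ‖α‖_∞))·‖f − b‖_∞. -/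
lemma cover_aux (y : ℕ → ℝ) :
    ∀ P, 1 ≤ P → (∀ i < P, y i < y (i + 1)) → ∀ z, y 0 ≤ z → z ≤ y P →
      ∃ p, 1 ≤ p ∧ p ≤ P ∧ y (p - 1) ≤ z ∧ z ≤ y p := by
  intro P
  induction P with
  | zero => omega
  | succ n ih =>
    intro _ hy z h0 hP
    rcases Nat.eq_or_lt_of_le (Nat.one_le_iff_ne_zero.mpr (Nat.succ_ne_zero n)) with h | h
    · exact ⟨1, le_refl _, by omega, by simpa using h0, by rw [h]; exact hP⟩
    · have hn : 1 ≤ n := by omega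
      by_cases hz : z ≤ y n
      · obtain ⟨p, h1, h2, h3, h4⟩ := ih hn (fun i hi => hy i (by omega)) z h0 hz
        exact ⟨p, h1, by omega, h3, h4⟩
      · exact ⟨n + 1, by omega, le_refl _, by simpa using le_of_not_ge hz, hP⟩

/-- Uniform error bound for the fractal perturbation process
(Section 3.2 of the paper): if `g^α` satisfies the self-referential equation
`g^α(L_p(x)) = f(L_p(x)) + α_p·(g^α(x) − b(x))` on `A` and `‖α‖_∞ < 1`, then
`‖g^α − f‖_∞ ≤ (‖α‖_∞/(1 − ‖α‖_∞))·‖f − b‖_∞`. -/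
theorem alpha_fractal_error_bound (P : ℕ) (hP : 1 ≤ P)
    (y : ℕ → ℝ) (hy : ∀ i < P, y i < y (i + 1))
    (L : ℕ → ℝ → ℝ)
    (hLbij : ∀ p ∈ Finset.Icc 1 P,
      Set.BijOn (L p) (Set.Icc (y 0) (y P)) (Set.Icc (y (p - 1)) (y p)))
    (hLcont : ∀ p ∈ Finset.Icc 1 P, ContinuousOn (L p) (Set.Icc (y 0) (y P)))
    (hLend : ∀ p ∈ Finset.Icc 1 P, L p (y 0) = y (p - 1) ∧ L p (y P) = y p)
    (f b gα : ℝ → ℝ)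
    (hf : ContinuousOn f (Set.Icc (y 0) (y P)))
    (hb : ContinuousOn b (Set.Icc (y 0) (y P)))
    (hgα : ContinuousOn gα (Set.Icc (y 0) (y P)))
    (α : ℕ → ℝ) (M : ℝ)
    (hM : M = (Finset.Icc 1 P).sup' (Finset.nonempty_Icc.mpr hP) (fun p => |α p|))
    (hM1 : M < 1)
    (hfix : ∀ p ∈ Finset.Icc 1 P, ∀ x ∈ Set.Icc (y 0) (y P),
      gα (L p x) = f (L p x) + α p * (gα x - b x)) :
    supDistOn (Set.Icc (y 0) (y P)) gα f ≤
      (M / (1 - M)) * supDistOn (Set.Icc (y 0) (y P)) f b := by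
  set A := Set.Icc (y 0) (y P) with hA
  set D := supDistOn A gα f with hD
  set E := supDistOn A f b with hE
  have hM0 : 0 ≤ M := by
    rw [hM]
    exact le_trans (abs_nonneg (α 1))
      (Finset.le_sup' (fun p => |α p|) (Finset.mem_Icc.mpr ⟨le_refl 1, hP⟩))
  have h1M : 0 < 1 - M := by linarith
  -- boundedness
  have hcompact : IsCompact A := isCompact_Icc
  have bdd : ∀ u v : ℝ → ℝ, ContinuousOn u A → ContinuousOn v A →
      BddAbove (Set.range fun x : A => |u x - v x|) := by
    intro u v hu hv
    have hc : ContinuousOn (fun x => |u x - v x|) A := (hu.sub hv).abs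
    have := (hcompact.image_of_continuousOn hc).bddAbove
    have heq : (Set.range fun x : A => |u x - v x|) = (fun x => |u x - v x|) '' A := by
      ext t
      constructor
      · rintro ⟨⟨x, hx⟩, rfl⟩; exact ⟨x, hx, rfl⟩
      · rintro ⟨x, hx, rfl⟩; exact ⟨⟨x, hx⟩, rfl⟩
    rwa [heq]
  have bddD := bdd gα f hgα hf
  have bddE := bdd f b hf hb
  have hE0 : 0 ≤ E := Real.iSup_nonneg fun x => abs_nonneg _
  have hleD : ∀ x ∈ A, |gα x - f x| ≤ D := fun x hx =>
    le_ciSup bddD (⟨x, hx⟩ : A)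
  have hleE : ∀ x ∈ A, |f x - b x| ≤ E := fun x hx =>
    le_ciSup bddE (⟨x, hx⟩ : A)
  have hD0 : 0 ≤ D := Real.iSup_nonneg fun x => abs_nonneg _
  -- key bound: D ≤ M*D + M*E
  have key : D ≤ M * D + M * E := by
    rw [hD, supDistOn]
    apply Real.iSup_le _ (by positivity)
    rintro ⟨z, hz⟩
    obtain ⟨p, hp1, hp2, hz1, hz2⟩ := cover_aux y P hP hy z hz.1 hz.2
    have hpmem : p ∈ Finset.Icc 1 P := Finset.mem_Icc.mpr ⟨hp1, hp2⟩
    obtain ⟨x, hx, hLx⟩ := (hLbij p hpmem).surjOn ⟨hz1, hz2⟩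
    have heq := hfix p hpmem x hx
    rw [hLx] at heq
    have hαp : |α p| ≤ M := hM ▸ Finset.le_sup' (fun p => |α p|) hpmem
    calc |gα z - f z| = |α p| * |gα x - b x| := by rw [heq, add_sub_cancel_left, abs_mul]
      _ ≤ M * (|gα x - f x| + |f x - b x|) := by
          apply mul_le_mul hαp (abs_sub_le _ (f x) _) (abs_nonneg _) hM0
      _ ≤ M * (D + E) := by
          apply mul_le_mul_of_nonneg_left (add_le_add (hleD x hx) (hleE x hx)) hM0
      _ = M * D + M * E := by ring
  -- conclude
  have : (1 - M) * D ≤ M * E := by linarith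
  rw [div_mul_eq_mul_div, le_div_iff₀ h1M]
  linarith [this]
end
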